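/- Let Φ, Ψ : [0,∞) → [0,∞) be Young functions and C > 0. If ‖f‖_{wL_Φ} ≤ C·‖f‖_{wL_Ψ} holds for every measurable f : ℝⁿ → ℝ with ‖f‖_{wL_Ψ} < ∞, then Φ(t) ≤ Ψ(Ct) for every t > 0. -/

import Mathlib

open MeasureTheory Filter Set
open scoped ENNReal Topology

/-!
Test the hypothesis on `f = (C t) · 𝟙_E` with `|E| = a`. Since `Ψ` is monotone, the weak
`Ψ`-condition at `b = 1` reduces to `Ψ(C t) · a ≤ 1`, so `‖f‖_{wL_Ψ} ≤ 1` whenever that holds, and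
then `‖f‖_{wL_Φ} ≤ C`. Every `b > C` in the defining set gives `Φ(s) · a ≤ 1` for `s < t`, and
left-continuity of `Φ` yields `Φ(t) · a ≤ 1`. As `a > 0` is arbitrary, `Φ(t) ≤ Ψ(C t)`.
-/

/-- A Young function: convex on `[0,∞)`, left-continuous, `Φ 0 = 0`,
`Φ t → ∞` as `t → ∞`, and taking values in `[0,∞)`. -/
def IsYoungFunction (Φ : ℝ → ℝ) : Prop :=
  ConvexOn ℝ (Set.Ici 0) Φ ∧
  (∀ t : ℝ, 0 ≤ t → ContinuousWithinAt Φ (Set.Iic t) t) ∧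
  Φ 0 = 0 ∧
  Tendsto Φ atTop atTop ∧
  ∀ t : ℝ, 0 ≤ t → 0 ≤ Φ t

/-- Generalized inverse `Φ⁻¹(s) = inf {r ≥ 0 : Φ r > s}`. -/
noncomputable def youngInv (Φ : ℝ → ℝ) (s : ℝ) : ℝ :=
  sInf {r : ℝ | 0 ≤ r ∧ s < Φ r}

/-- The weak Orlicz quasi-norm of `f` on `ℝⁿ`, valued in `ℝ≥0∞`. -/
noncomputable def wLuxNorm {n : ℕ} (Φ : ℝ → ℝ) (f : EuclideanSpace ℝ (Fin n) → ℝ) : ℝ≥0∞ :=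
  sInf (ENNReal.ofReal ''
    {b : ℝ | 0 < b ∧
      ∀ t : ℝ, 0 < t → ENNReal.ofReal (Φ t) * volume {x | t < |f x| / b} ≤ 1})

lemma ConvexOn.monotoneOn_Ici_of_le {Φ : ℝ → ℝ} (hΦ : ConvexOn ℝ (Ici 0) Φ)
    (h0 : ∀ u, 0 ≤ u → Φ 0 ≤ Φ u) : MonotoneOn Φ (Ici 0) := by
  intro s hs u hu hsu
  have hseg : s ∈ segment ℝ (0 : ℝ) u := by
    rw [segment_eq_Icc hu]
    exact ⟨hs, hsu⟩
  exact (hΦ.le_on_segment self_mem_Ici hu hseg).trans (max_le (h0 u hu) le_rfl)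

lemma IsYoungFunction.monotoneOn {Φ : ℝ → ℝ} (hΦ : IsYoungFunction Φ) :
    MonotoneOn Φ (Ici 0) :=
  hΦ.1.monotoneOn_Ici_of_le fun u hu ↦ by rw [hΦ.2.2.1]; exact hΦ.2.2.2.2 u hu

lemma MeasureTheory.Measure.exists_measurableSet_addHaar_eq {E : Type*}
    [NormedAddCommGroup E] [NormedSpace ℝ E] [FiniteDimensional ℝ E] [MeasurableSpace E]
    [BorelSpace E] (μ : Measure E) [μ.IsAddHaarMeasure] (hE : 0 < Module.finrank ℝ E)
    {a : ℝ} (ha : 0 < a) : ∃ s : Set E, MeasurableSet s ∧ μ s = ENNReal.ofReal a := by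
  have : Nontrivial E := Module.nontrivial_of_finrank_pos hE
  set c := (μ (Metric.ball 0 1)).toReal
  have hc : 0 < c :=
    ENNReal.toReal_pos (Metric.measure_ball_pos μ 0 one_pos).ne' measure_ball_lt_top.ne
  set r := (a / c) ^ (Module.finrank ℝ E : ℝ)⁻¹
  have hr : 0 < r := by positivity
  refine ⟨Metric.ball 0 r, measurableSet_ball, ?_⟩
  rw [μ.addHaar_ball_of_pos 0 hr, ← ENNReal.ofReal_toReal measure_ball_lt_top.ne,
    ← ENNReal.ofReal_mul (by positivity), Real.rpow_inv_natCast_pow (by positivity) hE.ne',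
    div_mul_cancel₀ _ hc.ne']

section WeakOrlicz

variable {n : ℕ} {Φ : ℝ → ℝ} {f : EuclideanSpace ℝ (Fin n) → ℝ}

lemma wLuxNorm_le_ofReal {b : ℝ} (hb : 0 < b)
    (hf : ∀ t : ℝ, 0 < t → ENNReal.ofReal (Φ t) * volume {x | t < |f x| / b} ≤ 1) :
    wLuxNorm Φ f ≤ ENNReal.ofReal b :=
  sInf_le ⟨b, ⟨hb, hf⟩, rfl⟩

lemma ofReal_mul_volume_le_one_of_wLuxNorm_lt {c : ℝ} (hc : wLuxNorm Φ f < ENNReal.ofReal c)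
    {t : ℝ} (ht : 0 < t) : ENNReal.ofReal (Φ t) * volume {x | t * c ≤ |f x|} ≤ 1 := by
  obtain ⟨_, ⟨b, ⟨hb, hbΦ⟩, rfl⟩, hbc⟩ := sInf_lt_iff.mp hc
  have hbc : b < c := (ENNReal.ofReal_lt_ofReal_iff_of_nonneg hb.le).mp hbc
  refine le_trans (mul_le_mul_right (measure_mono fun x (hx : t * c ≤ |f x|) ↦ ?_) _) (hbΦ t ht)
  change t < |f x| / b
  rw [lt_div_iff₀ hb]
  exact (mul_lt_mul_of_pos_left hbc ht).trans_le hx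

variable {E : Set (EuclideanSpace ℝ (Fin n))} {h : ℝ}

lemma wLuxNorm_indicator_le_one (hΦ : MonotoneOn Φ (Ici 0)) (hh : 0 ≤ h)
    (hE : ENNReal.ofReal (Φ h) * volume E ≤ 1) :
    wLuxNorm Φ (E.indicator fun _ ↦ h) ≤ 1 := by
  refine ENNReal.ofReal_one ▸ wLuxNorm_le_ofReal one_pos fun t ht ↦ ?_
  have hlevel : {x | t < |E.indicator (fun _ ↦ h) x| / 1} ⊆ if t < h then E else ∅ := by
    intro x hx
    by_cases hxE : x ∈ E
    · simp_all [abs_of_nonneg hh]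
    · simp_all [ht.not_gt]
  split_ifs at hlevel with hth
  · calc ENNReal.ofReal (Φ t) * volume {x | t < |E.indicator (fun _ ↦ h) x| / 1}
        ≤ ENNReal.ofReal (Φ h) * volume E := by
          gcongr
          exact hΦ ht.le hh hth.le
      _ ≤ 1 := hE
  · rw [subset_empty_iff.mp hlevel, measure_empty, mul_zero]
    exact zero_le_one

lemma ofReal_mul_volume_le_one_of_wLuxNorm_indicator_le {C : ℝ} (hC : 0 < C) (hh : 0 < h)
    (hΦ : ContinuousWithinAt Φ (Iic (h / C)) (h / C)) (hE : volume E ≠ ⊤)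
    (hf : wLuxNorm Φ (E.indicator fun _ ↦ h) ≤ ENNReal.ofReal C) :
    ENNReal.ofReal (Φ (h / C)) * volume E ≤ 1 := by
  have hlevel : {x | h ≤ |E.indicator (fun _ ↦ h) x|} = E := by
    ext x
    by_cases hxE : x ∈ E <;> simp [hxE, abs_of_pos hh, hh.not_ge]
  have hbelow : ∀ t ∈ Ioo 0 (h / C), ENNReal.ofReal (Φ t) * volume E ≤ 1 := by
    rintro t ⟨ht, htC⟩
    have hCt : C < h / t := (lt_div_iff₀ ht).mpr ((lt_div_iff₀' hC).mp htC)
    have hlt := hf.trans_lt ((ENNReal.ofReal_lt_ofReal_iff (hC.trans hCt)).mpr hCt)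
    simpa only [mul_div_cancel₀ h ht.ne', hlevel] using
      ofReal_mul_volume_le_one_of_wLuxNorm_lt hlt ht
  have hlim : Tendsto (fun t ↦ ENNReal.ofReal (Φ t) * volume E) (𝓝[<] (h / C))
      (𝓝 (ENNReal.ofReal (Φ (h / C)) * volume E)) :=
    ENNReal.Tendsto.mul_const
      (ENNReal.tendsto_ofReal ((hΦ.mono Iio_subset_Iic_self).tendsto)) (Or.inr hE)
  exact le_of_tendsto hlim (mem_of_superset (Ioo_mem_nhdsLT (by positivity)) hbelow)

end WeakOrlicz

lemma le_of_forall_pos_mul_le_one {x y : ℝ} (hy : 0 ≤ y)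
    (h : ∀ a : ℝ, 0 < a → y * a ≤ 1 → x * a ≤ 1) : x ≤ y := by
  by_contra! hxy
  have hxy' : 0 < x + y := by linarith
  have := h (2 / (x + y)) (by positivity) (by rw [mul_div_assoc', div_le_one hxy']; linarith)
  rw [mul_div_assoc', div_le_one hxy'] at this
  linarith

theorem young_le_of_wLuxNorm_le {n : ℕ} (hn : 0 < n) (Φ Ψ : ℝ → ℝ)
    (hΦ : IsYoungFunction Φ) (hΨ : IsYoungFunction Ψ) (C : ℝ) (hC : 0 < C)
    (h : ∀ f : EuclideanSpace ℝ (Fin n) → ℝ, Measurable f → wLuxNorm Ψ f < ⊤ →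
      wLuxNorm Φ f ≤ ENNReal.ofReal C * wLuxNorm Ψ f) :
    ∀ t : ℝ, 0 < t → Φ t ≤ Ψ (C * t) := by
  intro t ht
  have hCt : 0 < C * t := mul_pos hC ht
  have hΨCt : 0 ≤ Ψ (C * t) := hΨ.2.2.2.2 _ hCt.le
  refine le_of_forall_pos_mul_le_one hΨCt fun a ha hΨa ↦ ?_
  obtain ⟨E, hEm, hEa⟩ := volume.exists_measurableSet_addHaar_eq
    (by rwa [finrank_euclideanSpace_fin]) ha
  set f : EuclideanSpace ℝ (Fin n) → ℝ := E.indicator fun _ ↦ C * t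
  have hfΨ : wLuxNorm Ψ f ≤ 1 := wLuxNorm_indicator_le_one hΨ.monotoneOn hCt.le <| by
    rwa [hEa, ← ENNReal.ofReal_mul hΨCt, ENNReal.ofReal_le_one]
  have hfΦ : wLuxNorm Φ f ≤ ENNReal.ofReal C :=
    calc wLuxNorm Φ f ≤ ENNReal.ofReal C * wLuxNorm Ψ f :=
          h f (measurable_const.indicator hEm) (hfΨ.trans_lt ENNReal.one_lt_top)
      _ ≤ ENNReal.ofReal C := mul_le_of_le_one_right' hfΨ
  have hCt_div : C * t / C = t := mul_div_cancel_left₀ t hC.ne'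
  have := ofReal_mul_volume_le_one_of_wLuxNorm_indicator_le hC hCt
    (by rw [hCt_div]; exact hΦ.2.1 t ht.le) (hEa ▸ ENNReal.ofReal_ne_top) hfΦ
  rwa [hCt_div, hEa, ← ENNReal.ofReal_mul (hΦ.2.2.2.2 t ht.le), ENNReal.ofReal_le_one] at this
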